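/- Let λ > 0, a₁ > 0, F : (0,∞) → ℝ continuous and bounded with F(x) ≤ F∞ for all x, and suppose a₁ g + F∞ ≤ 0 for a constant g. Let L v = (1/2)σ²x²v'' + b x v' with b < a₁. If G₀ is a twice continuously differentiable solution of -L G₀(x) + (a₁+λ) G₀(x) = a₁ g + F(x) on (0,∞) with at most linear growth, then G₀(x) ≤ 0 for all x ∈ (0,∞). -/

import Mathlib

/-!
Write `L v = ½ σ² x² v'' + b x v'` (`gbmGenerator σ b`). The bound `a₁ g + F ≤ a₁ g + F∞ ≤ 0`
makes `G₀` a subsolution: `(a₁ + λ) G₀ ≤ L G₀` on `(0, ∞)`. Since `L (x ^ e) = P(e) x ^ e` with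
`P(e) = ½ σ² e (e - 1) + b e`, and `P(0) = 0`, `P(1) = b` are both below `a₁ + λ`, there are
exponents `q < 0 < 1 < p` for which `φ = x ^ p + x ^ q` satisfies `L φ ≤ (a₁ + λ) φ`; moreover
`φ` outgrows every linearly bounded function at both ends of `(0, ∞)`. If `G₀ x₀ > 0`, then
`G₀ - ε φ` with small `ε > 0` has a positive interior maximum, where `L` of it is `≤ 0`,
contradicting the two inequalities.
-/

open Set Filter Topology

noncomputable def gbmGenerator (σ b : ℝ) (v : ℝ → ℝ) (x : ℝ) : ℝ :=
  (1 / 2) * σ ^ 2 * x ^ 2 * deriv (deriv v) x + b * x * deriv v x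

noncomputable def gbmIndicial (σ b p : ℝ) : ℝ :=
  (1 / 2) * σ ^ 2 * p * (p - 1) + b * p

/- By the second-derivative test `x` would also be a local minimum, so `f` would be locally
constant and `deriv (deriv f) x = 0`. -/
theorem IsLocalMax.deriv_deriv_nonpos {f : ℝ → ℝ} {x : ℝ} (h : IsLocalMax f x)
    (hc : ContinuousAt f x) : deriv (deriv f) x ≤ 0 := by
  by_contra! hpos
  have hconst : f =ᶠ[𝓝 x] fun _ => f x :=
    (h.and (isLocalMin_of_deriv_deriv_pos hpos h.deriv_eq_zero hc)).mono
      fun _ hy => le_antisymm hy.1 hy.2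
  rw [(hconst.deriv.trans (by simp)).deriv_eq (f := fun _ => (0 : ℝ))] at hpos
  simp at hpos

theorem ContinuousOn.exists_isLocalMax_of_eventually_lt {f : ℝ → ℝ} {a x₀ : ℝ}
    (hf : ContinuousOn f (Ioi a)) (hx₀ : a < x₀) (hleft : ∀ᶠ y in 𝓝[>] a, f y < f x₀)
    (hright : ∀ᶠ y in atTop, f y < f x₀) : ∃ s, a < s ∧ IsLocalMax f s ∧ f x₀ ≤ f s := by
  obtain ⟨A, hfA, hA⟩ := (hleft.and (Ioo_mem_nhdsGT hx₀)).exists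
  obtain ⟨B, hfB, hB⟩ := (hright.and (eventually_ge_atTop x₀)).exists
  have hsub : Icc A B ⊆ Ioi a := fun y hy => hA.1.trans_le hy.1
  obtain ⟨s, hs, hmax⟩ :=
    isCompact_Icc.exists_isMaxOn ⟨x₀, hA.2.le, hB⟩ (hf.mono hsub)
  have hle : f x₀ ≤ f s := hmax ⟨hA.2.le, hB⟩
  have hAs : A < s := hs.1.lt_of_ne (by rintro rfl; linarith)
  have hsB : s < B := hs.2.lt_of_ne (by rintro rfl; linarith)
  exact ⟨s, hsub hs, hmax.isLocalMax (Icc_mem_nhds hAs hsB), hle⟩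

section Generator

variable {σ b : ℝ}

theorem gbmGenerator_nonpos_of_isLocalMax {v : ℝ → ℝ} {x : ℝ} (h : IsLocalMax v x)
    (hc : ContinuousAt v x) : gbmGenerator σ b v x ≤ 0 := by
  rw [gbmGenerator, h.deriv_eq_zero, mul_zero, add_zero]
  exact mul_nonpos_of_nonneg_of_nonpos (by positivity) (h.deriv_deriv_nonpos hc)

theorem gbmGenerator_const_mul (c : ℝ) (v : ℝ → ℝ) (x : ℝ) :
    gbmGenerator σ b (fun y => c * v y) x = c * gbmGenerator σ b v x := by
  simp only [gbmGenerator, deriv_const_mul_field']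
  ring

theorem gbmGenerator_rpow (p : ℝ) {x : ℝ} (hx : 0 < x) :
    gbmGenerator σ b (fun y => y ^ p) x = gbmIndicial σ b p * x ^ p := by
  simp only [gbmGenerator, gbmIndicial, Real.deriv_rpow_const', deriv_const_mul_field',
    Real.rpow_sub hx, Real.rpow_one]
  field_simp

variable {U : Set ℝ} {u v : ℝ → ℝ} {x : ℝ}

theorem ContDiffOn.differentiableAt_deriv (hu : ContDiffOn ℝ 2 u U) (hU : IsOpen U)
    (hx : x ∈ U) : DifferentiableAt ℝ (deriv u) x :=
  ((hu.deriv_of_isOpen hU (m := 1) (by norm_num)).differentiableOn one_ne_zero).differentiableAt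
    (hU.mem_nhds hx)

theorem gbmGenerator_add (hU : IsOpen U) (hu : ContDiffOn ℝ 2 u U) (hv : ContDiffOn ℝ 2 v U)
    (hx : x ∈ U) :
    gbmGenerator σ b (fun y => u y + v y) x = gbmGenerator σ b u x + gbmGenerator σ b v x := by
  have hd : deriv (fun y => u y + v y) =ᶠ[𝓝 x] fun y => deriv u y + deriv v y :=
    eventually_of_mem (hU.mem_nhds hx) fun y hy =>
      deriv_fun_add ((hu.differentiableOn two_ne_zero).differentiableAt (hU.mem_nhds hy))
        ((hv.differentiableOn two_ne_zero).differentiableAt (hU.mem_nhds hy))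
  rw [gbmGenerator, gbmGenerator, gbmGenerator, hd.deriv_eq, hd.eq_of_nhds,
    deriv_fun_add (hu.differentiableAt_deriv hU hx) (hv.differentiableAt_deriv hU hx)]
  ring

theorem gbmGenerator_sub (hU : IsOpen U) (hu : ContDiffOn ℝ 2 u U) (hv : ContDiffOn ℝ 2 v U)
    (hx : x ∈ U) :
    gbmGenerator σ b (fun y => u y - v y) x = gbmGenerator σ b u x - gbmGenerator σ b v x := by
  have hd : deriv (fun y => u y - v y) =ᶠ[𝓝 x] fun y => deriv u y - deriv v y :=
    eventually_of_mem (hU.mem_nhds hx) fun y hy =>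
      deriv_fun_sub ((hu.differentiableOn two_ne_zero).differentiableAt (hU.mem_nhds hy))
        ((hv.differentiableOn two_ne_zero).differentiableAt (hU.mem_nhds hy))
  rw [gbmGenerator, gbmGenerator, gbmGenerator, hd.deriv_eq, hd.eq_of_nhds,
    deriv_fun_sub (hu.differentiableAt_deriv hU hx) (hv.differentiableAt_deriv hU hx)]
  ring

end Generator

theorem continuous_gbmIndicial (σ b : ℝ) : Continuous (gbmIndicial σ b) := by
  unfold gbmIndicial
  fun_prop

theorem exists_one_lt_gbmIndicial_lt {σ b r : ℝ} (hbr : b < r) :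
    ∃ p, 1 < p ∧ gbmIndicial σ b p < r := by
  have hp : ∀ᶠ p in 𝓝[>] 1, gbmIndicial σ b p < r :=
    nhdsWithin_le_nhds <| (continuous_gbmIndicial σ b).tendsto 1 |>.eventually <|
      gt_mem_nhds (by simpa [gbmIndicial] using hbr)
  exact (eventually_mem_nhdsWithin.and hp).exists

theorem exists_neg_gbmIndicial_lt {σ b r : ℝ} (hr : 0 < r) :
    ∃ q, q < 0 ∧ gbmIndicial σ b q < r := by
  have hq : ∀ᶠ q in 𝓝[<] 0, gbmIndicial σ b q < r :=
    nhdsWithin_le_nhds <| (continuous_gbmIndicial σ b).tendsto 0 |>.eventually <|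
      gt_mem_nhds (by simpa [gbmIndicial] using hr)
  exact (eventually_mem_nhdsWithin.and hq).exists

theorem eventually_mul_one_add_lt_rpow_atTop (C : ℝ) {ε p : ℝ} (hε : 0 < ε) (hp : 1 < p) :
    ∀ᶠ y in atTop, C * (1 + y) < ε * y ^ p := by
  have h : Tendsto (fun y : ℝ => y * (ε * y ^ (p - 1) + -C)) atTop atTop :=
    tendsto_id.atTop_mul_atTop₀
      (((tendsto_rpow_atTop (sub_pos.2 hp)).const_mul_atTop hε).atTop_add tendsto_const_nhds)
  filter_upwards [h.eventually_gt_atTop C, eventually_gt_atTop 0] with y hy hy0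
  rw [Real.rpow_sub hy0, Real.rpow_one, mul_div_assoc', mul_add, mul_div_cancel₀ _ hy0.ne'] at hy
  linarith

theorem eventually_mul_one_add_lt_rpow_nhdsGT_zero (C : ℝ) {ε q : ℝ} (hε : 0 < ε) (hq : q < 0) :
    ∀ᶠ y in 𝓝[>] 0, C * (1 + y) < ε * y ^ q := by
  have h : Tendsto (fun y : ℝ => ε * y ^ q + -(C * (1 + y))) (𝓝[>] 0) atTop :=
    ((tendsto_rpow_neg_nhdsGT_zero hq).const_mul_atTop hε).atTop_add
      (tendsto_nhdsWithin_of_tendsto_nhds (Continuous.tendsto (by fun_prop) 0))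
  filter_upwards [h.eventually_gt_atTop 0] with y hy
  linarith

theorem exists_gbm_barrier {σ b r : ℝ} (hr : 0 < r) (hbr : b < r) :
    ∃ φ : ℝ → ℝ, ContDiffOn ℝ 2 φ (Ioi 0) ∧ (∀ x ∈ Ioi (0 : ℝ), 0 < φ x) ∧
      (∀ x ∈ Ioi (0 : ℝ), gbmGenerator σ b φ x ≤ r * φ x) ∧
      ∀ C ε : ℝ, 0 < ε → (∀ᶠ y in 𝓝[>] 0, C * (1 + y) < ε * φ y) ∧
        ∀ᶠ y in atTop, C * (1 + y) < ε * φ y := by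
  obtain ⟨p, hp, hpr⟩ := exists_one_lt_gbmIndicial_lt (σ := σ) hbr
  obtain ⟨q, hq, hqr⟩ := exists_neg_gbmIndicial_lt (σ := σ) (b := b) hr
  have hpow (e : ℝ) : ContDiffOn ℝ 2 (fun y : ℝ => y ^ e) (Ioi 0) := fun y hy =>
    (Real.contDiffAt_rpow_const_of_ne (ne_of_gt hy)).contDiffWithinAt
  refine ⟨fun y => y ^ p + y ^ q, (hpow p).add (hpow q),
    fun x hx => add_pos (Real.rpow_pos_of_pos hx p) (Real.rpow_pos_of_pos hx q),
    fun x hx => ?_, fun C ε hε => ⟨?_, ?_⟩⟩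
  · have hxp := Real.rpow_pos_of_pos hx p
    have hxq := Real.rpow_pos_of_pos hx q
    rw [gbmGenerator_add isOpen_Ioi (hpow p) (hpow q) hx, gbmGenerator_rpow p hx,
      gbmGenerator_rpow q hx]
    nlinarith
  · filter_upwards [eventually_mul_one_add_lt_rpow_nhdsGT_zero C hε hq, self_mem_nhdsWithin]
      with y hy hy0
    have := mul_pos hε (Real.rpow_pos_of_pos hy0 p)
    linarith
  · filter_upwards [eventually_mul_one_add_lt_rpow_atTop C hε hp, eventually_gt_atTop 0]
      with y hy hy0
    have := mul_pos hε (Real.rpow_pos_of_pos hy0 q)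
    linarith

theorem nonpos_of_mul_le_gbmGenerator {σ b r C : ℝ} {u : ℝ → ℝ} (hr : 0 < r) (hbr : b < r)
    (hu : ContDiffOn ℝ 2 u (Ioi 0))
    (hsub : ∀ x ∈ Ioi (0 : ℝ), r * u x ≤ gbmGenerator σ b u x)
    (hgrowth : ∀ x ∈ Ioi (0 : ℝ), u x ≤ C * (1 + x)) :
    ∀ x ∈ Ioi (0 : ℝ), u x ≤ 0 := by
  intro x₀ hx₀
  by_contra! hpos
  obtain ⟨φ, hφ, hφpos, hφsuper, hφtail⟩ := exists_gbm_barrier (σ := σ) hr hbr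
  have hφx₀ := hφpos x₀ hx₀
  set ε := u x₀ / (2 * φ x₀) with hεdef
  have hε : 0 < ε := by positivity
  have hεφ : ContDiffOn ℝ 2 (fun y => ε * φ y) (Ioi 0) := contDiffOn_const.mul hφ
  set w := fun y => u y - ε * φ y
  have hw : ContDiffOn ℝ 2 w (Ioi 0) := hu.sub hεφ
  have hwx₀ : w x₀ = u x₀ / 2 := by
    simp only [w, hεdef]
    field_simp
    ring
  obtain ⟨s, hs, hmax, hle⟩ := hw.continuousOn.exists_isLocalMax_of_eventually_lt hx₀
    (by
      filter_upwards [(hφtail C ε hε).1, self_mem_nhdsWithin] with y hy hy0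
      linarith [hgrowth y hy0])
    (by
      filter_upwards [(hφtail C ε hε).2, eventually_gt_atTop 0] with y hy hy0
      linarith [hgrowth y hy0])
  have hgen : gbmGenerator σ b w s ≤ 0 :=
    gbmGenerator_nonpos_of_isLocalMax hmax (hw.continuousOn.continuousAt (isOpen_Ioi.mem_nhds hs))
  rw [gbmGenerator_sub isOpen_Ioi hu hεφ hs, gbmGenerator_const_mul] at hgen
  have hws : 0 < w s := by linarith
  nlinarith [hsub s hs, mul_le_mul_of_nonneg_left (hφsuper s hs) hε.le, mul_pos hr hws]

theorem penalized_ode_nonpositive_general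
    (σ b a₁ lam : ℝ) (hba : b < a₁) (ha₁ : 0 < a₁) (hlam : 0 < lam)
    (F : ℝ → ℝ)
    (Finf : ℝ) (hFbdd : ∀ x ∈ Ioi (0 : ℝ), F x ≤ Finf)
    (g : ℝ) (hg : a₁ * g + Finf ≤ 0)
    (G₀ : ℝ → ℝ) (hG₀ : ContDiffOn ℝ 2 G₀ (Ioi 0))
    (hODE : ∀ x ∈ Ioi (0 : ℝ),
      -((1 / 2) * σ ^ 2 * x ^ 2 * deriv (deriv G₀) x + b * x * deriv G₀ x)
        + (a₁ + lam) * G₀ x = a₁ * g + F x)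
    (C : ℝ) (hgrowth : ∀ x ∈ Ioi (0 : ℝ), |G₀ x| ≤ C * (1 + x)) :
    ∀ x ∈ Ioi (0 : ℝ), G₀ x ≤ 0 := by
  have hsub : ∀ x ∈ Ioi (0 : ℝ), (a₁ + lam) * G₀ x ≤ gbmGenerator σ b G₀ x := fun x hx => by
    rw [gbmGenerator]
    linarith [hODE x hx, hFbdd x hx]
  exact nonpos_of_mul_le_gbmGenerator (by linarith) (by linarith) hG₀ hsub
    fun x hx => (le_abs_self _).trans (hgrowth x hx)

theorem penalized_ode_nonpositive
    (σ b a₁ lam : ℝ) (hσ : 0 < σ) (hba : b < a₁) (ha₁ : 0 < a₁) (hlam : 0 < lam)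
    (F : ℝ → ℝ) (hFcont : ContinuousOn F (Ioi 0))
    (Finf : ℝ) (hFbdd : ∀ x ∈ Ioi (0 : ℝ), F x ≤ Finf)
    (g : ℝ) (hg : a₁ * g + Finf ≤ 0)
    (G₀ : ℝ → ℝ) (hG₀ : ContDiffOn ℝ 2 G₀ (Ioi 0))
    (hODE : ∀ x ∈ Ioi (0 : ℝ),
      -((1 / 2) * σ ^ 2 * x ^ 2 * deriv (deriv G₀) x + b * x * deriv G₀ x)
        + (a₁ + lam) * G₀ x = a₁ * g + F x)
    (C : ℝ) (hgrowth : ∀ x ∈ Ioi (0 : ℝ), |G₀ x| ≤ C * (1 + x)) :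
    ∀ x ∈ Ioi (0 : ℝ), G₀ x ≤ 0 :=
  penalized_ode_nonpositive_general σ b a₁ lam hba ha₁ hlam F Finf hFbdd g hg G₀ hG₀ hODE C hgrowth
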